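/- We have $\sum_{n=1}^{\infty} \frac{\mu(n)}{n \cdot \operatorname{lcm}(5,n)^2} = \frac{1}{\zeta(3)} \cdot \frac{5-1}{5^3-1}$. -/

import Mathlib

/-!
Split both series according to whether `p ∣ n`. Since `μ (p * m)` is `-μ m` for `p ∤ m` and `0`
otherwise, and `lcm p n = p * n` for `p ∤ n`, both become multiples of
`S = ∑_{p ∤ n} μ n / n ^ 3`: the Dirichlet series of `μ` at `3`, which is `1 / ζ 3`, equals
`(1 - p⁻³) S`, while the given series equals `(p⁻² - p⁻³) S`.
-/

open ArithmeticFunction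
open scoped ArithmeticFunction.Moebius LSeries.notation

theorem tsum_eq_tsum_ite_not_dvd_add_tsum_mul {E : Type*} [NormedAddCommGroup E] [CompleteSpace E]
    {f : ℕ → E} (hf : Summable f) {p : ℕ} (hp : p ≠ 0) :
    ∑' n, f n = ∑' n, (if p ∣ n then 0 else f n) + ∑' m, f (p * m) := by
  have hsplit : ∀ n, f n = (if p ∣ n then 0 else f n) + (if p ∣ n then f n else 0) := by
    intro n; split_ifs <;> simp
  have hmul : ∑' m, f (p * m) = ∑' n, (if p ∣ n then f n else 0) := by
    refine Eq.trans ?_ ((mul_right_injective₀ hp).tsum_eq fun n hn ↦ ?_)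
    · simp
    · obtain ⟨m, rfl⟩ : p ∣ n := by by_contra h; simp [h] at hn
      exact ⟨m, rfl⟩
  rw [hmul, tsum_congr hsplit, Summable.tsum_add]
  · exact hf.summable_of_eq_zero_or_self fun n ↦ by split_ifs <;> simp
  · exact hf.summable_of_eq_zero_or_self fun n ↦ by split_ifs <;> simp

theorem summable_moebius_div_cube : Summable fun n : ℕ ↦ (μ n : ℂ) / (n : ℂ) ^ 3 := by
  refine Summable.of_norm_bounded (Real.summable_one_div_nat_pow.mpr (by norm_num : 1 < 3))
    fun n ↦ ?_
  rw [norm_div, norm_pow, Complex.norm_natCast, Complex.norm_intCast]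
  gcongr
  exact_mod_cast abs_moebius_le_one

theorem tsum_moebius_div_cube : ∑' n : ℕ, (μ n : ℂ) / (n : ℂ) ^ 3 = 1 / riemannZeta 3 := by
  have h3 : 1 < (3 : ℂ).re := by norm_num
  have hL : LSeries (↗μ) 3 = ∑' n : ℕ, (μ n : ℂ) / (n : ℂ) ^ 3 := by
    rw [LSeries_def₀ (by simp)]
    exact tsum_congr fun n ↦ by norm_cast
  rw [← hL, ← LSeries_zeta_eq_riemannZeta h3]
  exact eq_one_div_of_mul_eq_one_right (LSeries_zeta_mul_Lseries_moebius h3)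

section

variable {p : ℕ}

theorem summable_moebius_div_mul_lcm_sq (hp : p ≠ 0) :
    Summable fun n : ℕ ↦ (μ n : ℂ) / ((n : ℂ) * (Nat.lcm p n : ℂ) ^ 2) := by
  refine Summable.of_norm_bounded summable_moebius_div_cube.norm fun n ↦ ?_
  rcases n.eq_zero_or_pos with rfl | hn
  · simp
  have hle : n ≤ Nat.lcm p n := Nat.le_of_dvd (Nat.lcm_pos hp.bot_lt hn) (Nat.dvd_lcm_right p n)
  simp only [norm_div, norm_mul, norm_pow, Complex.norm_natCast]
  gcongr
  rw [pow_succ']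
  gcongr

theorem ArithmeticFunction.moebius_prime_mul (hp : p.Prime) (m : ℕ) :
    μ (p * m) = if p ∣ m then 0 else -μ m := by
  split_ifs with h
  · refine moebius_eq_zero_of_not_squarefree fun hsq ↦ ?_
    exact hp.ne_one ((Nat.squarefree_mul_iff.mp hsq).1.eq_one_of_dvd h)
  · rw [isMultiplicative_moebius.map_mul_of_coprime (hp.coprime_iff_not_dvd.mpr h),
      moebius_apply_prime hp, neg_one_mul]

theorem moebius_prime_mul_div_cube (hp : p.Prime) (m : ℕ) :
    (μ (p * m) : ℂ) / ((p * m : ℕ) : ℂ) ^ 3 =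
      -(1 / (p : ℂ) ^ 3) * if p ∣ m then 0 else (μ m : ℂ) / (m : ℂ) ^ 3 := by
  rw [moebius_prime_mul hp]
  split_ifs
  · simp
  · push_cast
    ring

theorem moebius_div_mul_lcm_sq_of_not_dvd (hp : p.Prime) {n : ℕ} (hn : ¬ p ∣ n) :
    (μ n : ℂ) / ((n : ℂ) * (Nat.lcm p n : ℂ) ^ 2) =
      1 / (p : ℂ) ^ 2 * ((μ n : ℂ) / (n : ℂ) ^ 3) := by
  rw [(hp.coprime_iff_not_dvd.mpr hn).lcm_eq_mul]
  push_cast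
  ring

theorem tsum_moebius_div_cube_eq_mul_tsum_not_dvd (hp : p.Prime) :
    ∑' n : ℕ, (μ n : ℂ) / (n : ℂ) ^ 3 =
      (1 - 1 / (p : ℂ) ^ 3) * ∑' n : ℕ, if p ∣ n then 0 else (μ n : ℂ) / (n : ℂ) ^ 3 := by
  rw [tsum_eq_tsum_ite_not_dvd_add_tsum_mul summable_moebius_div_cube hp.ne_zero]
  simp_rw [moebius_prime_mul_div_cube hp]
  rw [tsum_mul_left]
  ring

theorem tsum_moebius_div_mul_lcm_sq_eq_mul_tsum_not_dvd (hp : p.Prime) :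
    ∑' n : ℕ, (μ n : ℂ) / ((n : ℂ) * (Nat.lcm p n : ℂ) ^ 2) =
      (1 / (p : ℂ) ^ 2 - 1 / (p : ℂ) ^ 3) *
        ∑' n : ℕ, if p ∣ n then 0 else (μ n : ℂ) / (n : ℂ) ^ 3 := by
  rw [tsum_eq_tsum_ite_not_dvd_add_tsum_mul (summable_moebius_div_mul_lcm_sq hp.ne_zero)
    hp.ne_zero]
  have hcoprime : ∀ n, (if p ∣ n then 0 else (μ n : ℂ) / ((n : ℂ) * (Nat.lcm p n : ℂ) ^ 2)) =
      1 / (p : ℂ) ^ 2 * if p ∣ n then 0 else (μ n : ℂ) / (n : ℂ) ^ 3 := fun n ↦ by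
    split_ifs with h
    · simp
    · exact moebius_div_mul_lcm_sq_of_not_dvd hp h
  have hmul : ∀ m, (μ (p * m) : ℂ) / (((p * m : ℕ) : ℂ) * (Nat.lcm p (p * m) : ℂ) ^ 2) =
      -(1 / (p : ℂ) ^ 3) * if p ∣ m then 0 else (μ m : ℂ) / (m : ℂ) ^ 3 := fun m ↦ by
    rw [← moebius_prime_mul_div_cube hp, Nat.lcm_eq_right (dvd_mul_right p m)]
    ring
  rw [tsum_congr hcoprime, tsum_congr hmul, tsum_mul_left, tsum_mul_left]
  ring

theorem tsum_moebius_div_mul_lcm_sq (hp : p.Prime) :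
    ∑' n : ℕ, (μ n : ℂ) / ((n : ℂ) * (Nat.lcm p n : ℂ) ^ 2) =
      1 / riemannZeta 3 * (((p : ℂ) - 1) / ((p : ℂ) ^ 3 - 1)) := by
  have hp3 : (p : ℂ) ^ 3 - 1 ≠ 0 := by
    rw [sub_ne_zero]
    exact_mod_cast (Nat.one_lt_pow three_ne_zero hp.one_lt).ne'
  have hp0 : (p : ℂ) ≠ 0 := Nat.cast_ne_zero.mpr hp.ne_zero
  rw [← tsum_moebius_div_cube, tsum_moebius_div_cube_eq_mul_tsum_not_dvd hp,
    tsum_moebius_div_mul_lcm_sq_eq_mul_tsum_not_dvd hp]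
  field_simp

end

/-- `∑ μ(n)/(n · lcm(5,n)²) = (1/ζ(3)) · (5-1)/(5³-1)`. -/
theorem stmt_2 :
    ∑' n : ℕ, (μ n : ℂ) / ((n : ℂ) * (Nat.lcm 5 n : ℂ) ^ 2) =
      (1 / riemannZeta 3) * (((5 : ℂ) - 1) / ((5 : ℂ) ^ 3 - 1)) := by
  exact_mod_cast tsum_moebius_div_mul_lcm_sq Nat.prime_five
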